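/- arXiv:1612.00109 — 2 statements merged into one kernel-verified Lean document; each statement's English description precedes it below -/
import Mathlib

section
/- For positive integers m, n and smooth μ(t,x) = x/√(t² - |x|²) defined for |x| < t, the function w(t,x) = t^{-m} cos(n⟨μ⟩^{-1} t) (where ⟨μ⟩ = √(1+|μ|²)) satisfies (□ + 1)w = (1 - n²) t^{-m} cos(n⟨μ⟩^{-1}t) + 2n(m-1) t^{-m-1} ⟨μ⟩ sin(n⟨μ⟩^{-1}t) + m(m+1) t^{-m-2} cos(n⟨μ⟩^{-1}t), where □ = ∂_t² - Δ_x in 2 space dimensions. -/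
set_option maxHeartbeats 1000000

open Real

private lemma sqrtD {c s : ℝ} (h : c < s ^ 2) :
    HasDerivAt (fun s' : ℝ => Real.sqrt (s' ^ 2 - c)) (s / Real.sqrt (s ^ 2 - c)) s := by
  have hpos : 0 < s ^ 2 - c := by linarith
  have h1 : HasDerivAt (fun s' : ℝ => s' ^ 2 - c) (2 * s) s := by
    simpa using (hasDerivAt_pow 2 s).sub_const c
  have h2 := (Real.hasDerivAt_sqrt hpos.ne').comp s h1
  have hρ : 0 < Real.sqrt (s ^ 2 - c) := Real.sqrt_pos.mpr hpos
  refine h2.congr_deriv ?_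
  field_simp

private lemma sqrtD2 {b y : ℝ} (h : y ^ 2 < b) :
    HasDerivAt (fun y' : ℝ => Real.sqrt (b - y' ^ 2)) (-(y / Real.sqrt (b - y ^ 2))) y := by
  have hpos : 0 < b - y ^ 2 := by linarith
  have h1 : HasDerivAt (fun y' : ℝ => b - y' ^ 2) (-(2 * y)) y := by
    simpa using (hasDerivAt_pow 2 y).const_sub b
  have h2 := (Real.hasDerivAt_sqrt hpos.ne').comp y h1
  have hρ : 0 < Real.sqrt (b - y ^ 2) := Real.sqrt_pos.mpr hpos
  refine h2.congr_deriv ?_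
  field_simp

private lemma timeD1 (M : ℤ) (c nn : ℝ) {s : ℝ} (hs : 0 < s) (h : c < s ^ 2) :
    HasDerivAt (fun s' : ℝ => s' ^ M * Real.cos (nn * Real.sqrt (s' ^ 2 - c)))
      ((M : ℝ) * (s ^ (M - 1) * Real.cos (nn * Real.sqrt (s ^ 2 - c)))
        - nn * (s ^ M * ((s / Real.sqrt (s ^ 2 - c)) * Real.sin (nn * Real.sqrt (s ^ 2 - c))))) s := by
  have h1 : HasDerivAt (fun s' : ℝ => nn * Real.sqrt (s' ^ 2 - c))
      (nn * (s / Real.sqrt (s ^ 2 - c))) s := (sqrtD h).const_mul nn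
  have h2 : HasDerivAt (fun s' : ℝ => Real.cos (nn * Real.sqrt (s' ^ 2 - c)))
      (-Real.sin (nn * Real.sqrt (s ^ 2 - c)) * (nn * (s / Real.sqrt (s ^ 2 - c)))) s :=
    (Real.hasDerivAt_cos _).comp s h1
  have h3 := (hasDerivAt_zpow M s (Or.inl hs.ne')).mul h2
  refine h3.congr_deriv ?_
  ring

private lemma timeD2 (M : ℤ) (c nn : ℝ) {s : ℝ} (hs : 0 < s) (h : c < s ^ 2) :
    HasDerivAt (fun s' : ℝ =>
        (M : ℝ) * (s' ^ (M - 1) * Real.cos (nn * Real.sqrt (s' ^ 2 - c)))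
        - nn * (s' ^ M * ((s' / Real.sqrt (s' ^ 2 - c)) * Real.sin (nn * Real.sqrt (s' ^ 2 - c)))))
      ((M : ℝ) * ((M : ℝ) - 1) * (s ^ (M - 2) * Real.cos (nn * Real.sqrt (s ^ 2 - c)))
        - 2 * (M : ℝ) * nn * (s ^ (M - 1) * ((s / Real.sqrt (s ^ 2 - c)) * Real.sin (nn * Real.sqrt (s ^ 2 - c))))
        - nn ^ 2 * (s ^ M * ((s ^ 2 / (Real.sqrt (s ^ 2 - c)) ^ 2) * Real.cos (nn * Real.sqrt (s ^ 2 - c))))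
        - nn * (s ^ M * ((1 / Real.sqrt (s ^ 2 - c) - s ^ 2 / (Real.sqrt (s ^ 2 - c)) ^ 3)
            * Real.sin (nn * Real.sqrt (s ^ 2 - c))))) s := by
  have hρ : 0 < Real.sqrt (s ^ 2 - c) := Real.sqrt_pos.mpr (by linarith)
  have ha := (timeD1 (M - 1) c nn hs h).const_mul (M : ℝ)
  have hq : HasDerivAt (fun s' : ℝ => s' / Real.sqrt (s' ^ 2 - c))
      ((1 * Real.sqrt (s ^ 2 - c) - s * (s / Real.sqrt (s ^ 2 - c))) / (Real.sqrt (s ^ 2 - c)) ^ 2) s :=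
    (hasDerivAt_id s).div (sqrtD h) hρ.ne'
  have hsin : HasDerivAt (fun s' : ℝ => Real.sin (nn * Real.sqrt (s' ^ 2 - c)))
      (Real.cos (nn * Real.sqrt (s ^ 2 - c)) * (nn * (s / Real.sqrt (s ^ 2 - c)))) s :=
    (Real.hasDerivAt_sin _).comp s ((sqrtD h).const_mul nn)
  have hb := ((hasDerivAt_zpow M s (Or.inl hs.ne')).mul (hq.mul hsin)).const_mul nn
  have htot := ha.sub hb
  simp only [show M - 1 - 1 = M - 2 from by ring] at htot
  simp only [Pi.mul_apply, Int.cast_sub, Int.cast_one] at htot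
  refine htot.congr_deriv ?_
  field_simp
  ring

private lemma spaceD1 (A b nn : ℝ) {y : ℝ} (h : y ^ 2 < b) :
    HasDerivAt (fun y' : ℝ => A * Real.cos (nn * Real.sqrt (b - y' ^ 2)))
      (A * (nn * ((y / Real.sqrt (b - y ^ 2)) * Real.sin (nn * Real.sqrt (b - y ^ 2))))) y := by
  have h1 : HasDerivAt (fun y' : ℝ => Real.cos (nn * Real.sqrt (b - y' ^ 2)))
      (-Real.sin (nn * Real.sqrt (b - y ^ 2)) * (nn * -(y / Real.sqrt (b - y ^ 2)))) y :=
    (Real.hasDerivAt_cos _).comp y ((sqrtD2 h).const_mul nn)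
  have h2 := h1.const_mul A
  refine h2.congr_deriv ?_
  ring

private lemma spaceD2 (A b nn : ℝ) {y : ℝ} (h : y ^ 2 < b) :
    HasDerivAt (fun y' : ℝ =>
        A * (nn * ((y' / Real.sqrt (b - y' ^ 2)) * Real.sin (nn * Real.sqrt (b - y' ^ 2)))))
      (A * nn * ((1 / Real.sqrt (b - y ^ 2) + y ^ 2 / (Real.sqrt (b - y ^ 2)) ^ 3)
          * Real.sin (nn * Real.sqrt (b - y ^ 2)))
        - A * nn ^ 2 * ((y ^ 2 / (Real.sqrt (b - y ^ 2)) ^ 2) * Real.cos (nn * Real.sqrt (b - y ^ 2)))) y := by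
  have hρ : 0 < Real.sqrt (b - y ^ 2) := Real.sqrt_pos.mpr (by linarith)
  have hq : HasDerivAt (fun y' : ℝ => y' / Real.sqrt (b - y' ^ 2))
      ((1 * Real.sqrt (b - y ^ 2) - y * -(y / Real.sqrt (b - y ^ 2))) / (Real.sqrt (b - y ^ 2)) ^ 2) y :=
    (hasDerivAt_id y).div (sqrtD2 h) hρ.ne'
  have hsin : HasDerivAt (fun y' : ℝ => Real.sin (nn * Real.sqrt (b - y' ^ 2)))
      (Real.cos (nn * Real.sqrt (b - y ^ 2)) * (nn * -(y / Real.sqrt (b - y ^ 2)))) y :=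
    (Real.hasDerivAt_sin _).comp y ((sqrtD2 h).const_mul nn)
  have htot := ((hq.mul hsin).const_mul nn).const_mul A
  refine htot.congr_deriv ?_
  field_simp
  ring

theorem box_plus_one_of_cos_mode (m n : ℕ) (hm : 0 < m) (hn : 0 < n)
    (w : ℝ → ℝ → ℝ → ℝ)
    (hw : ∀ s y₁ y₂ : ℝ, w s y₁ y₂
      = s ^ (-(m : ℤ)) * Real.cos (n * Real.sqrt (s ^ 2 - (y₁ ^ 2 + y₂ ^ 2))))
    (t x₁ x₂ : ℝ) (hx : Real.sqrt (x₁ ^ 2 + x₂ ^ 2) < t) :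
    (deriv (fun s => deriv (fun s' => w s' x₁ x₂) s) t
      - deriv (fun y => deriv (fun y' => w t y' x₂) y) x₁
      - deriv (fun y => deriv (fun y' => w t x₁ y') y) x₂)
      + w t x₁ x₂
    = (1 - (n : ℝ) ^ 2) * t ^ (-(m : ℤ))
        * Real.cos (n * Real.sqrt (t ^ 2 - (x₁ ^ 2 + x₂ ^ 2)))
      + 2 * n * ((m : ℝ) - 1) * t ^ (-(m : ℤ) - 1)
        * (t / Real.sqrt (t ^ 2 - (x₁ ^ 2 + x₂ ^ 2)))
        * Real.sin (n * Real.sqrt (t ^ 2 - (x₁ ^ 2 + x₂ ^ 2)))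
      + m * ((m : ℝ) + 1) * t ^ (-(m : ℤ) - 2)
        * Real.cos (n * Real.sqrt (t ^ 2 - (x₁ ^ 2 + x₂ ^ 2))) := by
  set M : ℤ := -(m : ℤ) with hM
  have h0c : (0:ℝ) ≤ x₁ ^ 2 + x₂ ^ 2 := by positivity
  have ht0 : 0 < t := lt_of_le_of_lt (Real.sqrt_nonneg _) hx
  have hct : x₁ ^ 2 + x₂ ^ 2 < t ^ 2 := by
    nlinarith [Real.sq_sqrt h0c, Real.sqrt_nonneg (x₁ ^ 2 + x₂ ^ 2)]
  -- time part
  have hFeq : (fun s' => w s' x₁ x₂)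
      = fun s' => s' ^ M * Real.cos ((n : ℝ) * Real.sqrt (s' ^ 2 - (x₁ ^ 2 + x₂ ^ 2))) :=
    funext fun s => hw s x₁ x₂
  have hT : deriv (fun s => deriv (fun s' => w s' x₁ x₂) s) t
      = ((M : ℝ) * ((M : ℝ) - 1) * (t ^ (M - 2) * Real.cos ((n:ℝ) * Real.sqrt (t ^ 2 - (x₁ ^ 2 + x₂ ^ 2))))
        - 2 * (M : ℝ) * (n:ℝ) * (t ^ (M - 1) * ((t / Real.sqrt (t ^ 2 - (x₁ ^ 2 + x₂ ^ 2))) * Real.sin ((n:ℝ) * Real.sqrt (t ^ 2 - (x₁ ^ 2 + x₂ ^ 2)))))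
        - (n:ℝ) ^ 2 * (t ^ M * ((t ^ 2 / (Real.sqrt (t ^ 2 - (x₁ ^ 2 + x₂ ^ 2))) ^ 2) * Real.cos ((n:ℝ) * Real.sqrt (t ^ 2 - (x₁ ^ 2 + x₂ ^ 2)))))
        - (n:ℝ) * (t ^ M * ((1 / Real.sqrt (t ^ 2 - (x₁ ^ 2 + x₂ ^ 2)) - t ^ 2 / (Real.sqrt (t ^ 2 - (x₁ ^ 2 + x₂ ^ 2))) ^ 3)
            * Real.sin ((n:ℝ) * Real.sqrt (t ^ 2 - (x₁ ^ 2 + x₂ ^ 2)))))) := by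
    have hev : (fun s => deriv (fun s' => w s' x₁ x₂) s) =ᶠ[nhds t]
        (fun s' => (M : ℝ) * (s' ^ (M - 1) * Real.cos ((n:ℝ) * Real.sqrt (s' ^ 2 - (x₁ ^ 2 + x₂ ^ 2))))
          - (n:ℝ) * (s' ^ M * ((s' / Real.sqrt (s' ^ 2 - (x₁ ^ 2 + x₂ ^ 2))) * Real.sin ((n:ℝ) * Real.sqrt (s' ^ 2 - (x₁ ^ 2 + x₂ ^ 2)))))) := by
      filter_upwards [(isOpen_lt continuous_const continuous_id).mem_nhds hx] with s hs
      have hs' : Real.sqrt (x₁ ^ 2 + x₂ ^ 2) < s := hs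
      have hs0 : 0 < s := lt_of_le_of_lt (Real.sqrt_nonneg _) hs'
      have hcs : x₁ ^ 2 + x₂ ^ 2 < s ^ 2 := by
        nlinarith [Real.sq_sqrt h0c, Real.sqrt_nonneg (x₁ ^ 2 + x₂ ^ 2)]
      rw [hFeq]
      exact (timeD1 M (x₁ ^ 2 + x₂ ^ 2) (n:ℝ) hs0 hcs).deriv
    rw [hev.deriv_eq]
    exact (timeD2 M (x₁ ^ 2 + x₂ ^ 2) (n:ℝ) ht0 hct).deriv
  -- x₁ part
  have hF1eq : (fun y' => w t y' x₂)
      = fun y' => t ^ M * Real.cos ((n : ℝ) * Real.sqrt (t ^ 2 - x₂ ^ 2 - y' ^ 2)) := by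
    funext y
    rw [hw, show t ^ 2 - (y ^ 2 + x₂ ^ 2) = t ^ 2 - x₂ ^ 2 - y ^ 2 from by ring]
  have hx1b : x₁ ^ 2 < t ^ 2 - x₂ ^ 2 := by linarith
  have hS1 : deriv (fun y => deriv (fun y' => w t y' x₂) y) x₁
      = (t ^ M * (n:ℝ) * ((1 / Real.sqrt (t ^ 2 - x₂ ^ 2 - x₁ ^ 2) + x₁ ^ 2 / (Real.sqrt (t ^ 2 - x₂ ^ 2 - x₁ ^ 2)) ^ 3)
          * Real.sin ((n:ℝ) * Real.sqrt (t ^ 2 - x₂ ^ 2 - x₁ ^ 2)))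
        - t ^ M * (n:ℝ) ^ 2 * ((x₁ ^ 2 / (Real.sqrt (t ^ 2 - x₂ ^ 2 - x₁ ^ 2)) ^ 2) * Real.cos ((n:ℝ) * Real.sqrt (t ^ 2 - x₂ ^ 2 - x₁ ^ 2)))) := by
    have hev : (fun y => deriv (fun y' => w t y' x₂) y) =ᶠ[nhds x₁]
        (fun y' => t ^ M * ((n:ℝ) * ((y' / Real.sqrt (t ^ 2 - x₂ ^ 2 - y' ^ 2)) * Real.sin ((n:ℝ) * Real.sqrt (t ^ 2 - x₂ ^ 2 - y' ^ 2))))) := by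
      filter_upwards [(isOpen_lt (continuous_pow 2) continuous_const).mem_nhds hx1b] with y hy
      rw [hF1eq]
      exact (spaceD1 (t ^ M) (t ^ 2 - x₂ ^ 2) (n:ℝ) hy).deriv
    rw [hev.deriv_eq]
    exact (spaceD2 (t ^ M) (t ^ 2 - x₂ ^ 2) (n:ℝ) hx1b).deriv
  -- x₂ part
  have hF2eq : (fun y' => w t x₁ y')
      = fun y' => t ^ M * Real.cos ((n : ℝ) * Real.sqrt (t ^ 2 - x₁ ^ 2 - y' ^ 2)) := by
    funext y
    rw [hw, show t ^ 2 - (x₁ ^ 2 + y ^ 2) = t ^ 2 - x₁ ^ 2 - y ^ 2 from by ring]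
  have hx2b : x₂ ^ 2 < t ^ 2 - x₁ ^ 2 := by linarith
  have hS2 : deriv (fun y => deriv (fun y' => w t x₁ y') y) x₂
      = (t ^ M * (n:ℝ) * ((1 / Real.sqrt (t ^ 2 - x₁ ^ 2 - x₂ ^ 2) + x₂ ^ 2 / (Real.sqrt (t ^ 2 - x₁ ^ 2 - x₂ ^ 2)) ^ 3)
          * Real.sin ((n:ℝ) * Real.sqrt (t ^ 2 - x₁ ^ 2 - x₂ ^ 2)))
        - t ^ M * (n:ℝ) ^ 2 * ((x₂ ^ 2 / (Real.sqrt (t ^ 2 - x₁ ^ 2 - x₂ ^ 2)) ^ 2) * Real.cos ((n:ℝ) * Real.sqrt (t ^ 2 - x₁ ^ 2 - x₂ ^ 2)))) := by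
    have hev : (fun y => deriv (fun y' => w t x₁ y') y) =ᶠ[nhds x₂]
        (fun y' => t ^ M * ((n:ℝ) * ((y' / Real.sqrt (t ^ 2 - x₁ ^ 2 - y' ^ 2)) * Real.sin ((n:ℝ) * Real.sqrt (t ^ 2 - x₁ ^ 2 - y' ^ 2))))) := by
      filter_upwards [(isOpen_lt (continuous_pow 2) continuous_const).mem_nhds hx2b] with y hy
      rw [hF2eq]
      exact (spaceD1 (t ^ M) (t ^ 2 - x₁ ^ 2) (n:ℝ) hy).deriv
    rw [hev.deriv_eq]
    exact (spaceD2 (t ^ M) (t ^ 2 - x₁ ^ 2) (n:ℝ) hx2b).deriv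
  rw [hT, hS1, hS2, hw t x₁ x₂]
  rw [show t ^ 2 - x₂ ^ 2 - x₁ ^ 2 = t ^ 2 - (x₁ ^ 2 + x₂ ^ 2) from by ring,
      show t ^ 2 - x₁ ^ 2 - x₂ ^ 2 = t ^ 2 - (x₁ ^ 2 + x₂ ^ 2) from by ring]
  set R := Real.sqrt (t ^ 2 - (x₁ ^ 2 + x₂ ^ 2)) with hRdef
  have hRpos : 0 < R := Real.sqrt_pos.mpr (by linarith)
  have hsq : R ^ 2 = t ^ 2 - (x₁ ^ 2 + x₂ ^ 2) := Real.sq_sqrt (by linarith)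
  have hx2sq : x₂ ^ 2 = t ^ 2 - R ^ 2 - x₁ ^ 2 := by linarith
  rw [hx2sq]
  simp only [hM, zpow_sub₀ ht0.ne', zpow_one, zpow_two]
  push_cast
  field_simp
  ring
end

section
/- For positive integers m, n, the function w(t,x) = t^{-m} sin(n√(t² - |x|²)) defined for |x| < t (x ∈ ℝ²) satisfies (□ + 1)w = (1 - n²) t^{-m} sin(n√(t²-|x|²)) - 2n(m-1) t^{-m-1} (t/√(t²-|x|²)) cos(n√(t²-|x|²)) + m(m+1) t^{-m-2} sin(n√(t²-|x|²)). -/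
open Real

theorem box_plus_one_of_sin_mode (m n : ℕ) (hm : 0 < m) (hn : 0 < n)
    (w : ℝ → ℝ → ℝ → ℝ)
    (hw : ∀ s y₁ y₂ : ℝ, w s y₁ y₂
      = s ^ (-(m : ℤ)) * Real.sin (n * Real.sqrt (s ^ 2 - (y₁ ^ 2 + y₂ ^ 2))))
    (t x₁ x₂ : ℝ) (hx : Real.sqrt (x₁ ^ 2 + x₂ ^ 2) < t) :
    (deriv (fun s => deriv (fun s' => w s' x₁ x₂) s) t
      - deriv (fun y => deriv (fun y' => w t y' x₂) y) x₁
      - deriv (fun y => deriv (fun y' => w t x₁ y') y) x₂)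
      + w t x₁ x₂
    = (1 - (n : ℝ) ^ 2) * t ^ (-(m : ℤ))
        * Real.sin (n * Real.sqrt (t ^ 2 - (x₁ ^ 2 + x₂ ^ 2)))
      - 2 * n * ((m : ℝ) - 1) * t ^ (-(m : ℤ) - 1)
        * (t / Real.sqrt (t ^ 2 - (x₁ ^ 2 + x₂ ^ 2)))
        * Real.cos (n * Real.sqrt (t ^ 2 - (x₁ ^ 2 + x₂ ^ 2)))
      + m * ((m : ℝ) + 1) * t ^ (-(m : ℤ) - 2)
        * Real.sin (n * Real.sqrt (t ^ 2 - (x₁ ^ 2 + x₂ ^ 2))) := by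
  have ht0 : 0 < t := lt_of_le_of_lt (Real.sqrt_nonneg _) hx
  have hRt : x₁^2 + x₂^2 < t^2 := by
    nlinarith [Real.sq_sqrt (show (0:ℝ) ≤ x₁^2+x₂^2 by positivity), Real.sqrt_nonneg (x₁^2+x₂^2)]
  have hp : 0 < t^2 - (x₁^2+x₂^2) := by linarith
  have hq0 : 0 < Real.sqrt (t^2 - (x₁^2+x₂^2)) := Real.sqrt_pos.mpr hp
  -- time direction -------------------------------------------------------
  have keyt : ∀ s : ℝ, Real.sqrt (x₁^2+x₂^2) < s →
      HasDerivAt (fun s' => w s' x₁ x₂)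
        ((-(m:ℝ)) * s ^ (-(m:ℤ)-1) * Real.sin (n * Real.sqrt (s^2 - (x₁^2+x₂^2)))
          + s ^ (-(m:ℤ)) * ((n:ℝ) * (s / Real.sqrt (s^2 - (x₁^2+x₂^2)))
              * Real.cos (n * Real.sqrt (s^2 - (x₁^2+x₂^2))))) s := by
    intro s hs
    have hs0 : 0 < s := lt_of_le_of_lt (Real.sqrt_nonneg _) hs
    have hp : 0 < s^2 - (x₁^2+x₂^2) := by
      nlinarith [Real.sq_sqrt (show (0:ℝ) ≤ x₁^2+x₂^2 by positivity), Real.sqrt_nonneg (x₁^2+x₂^2)]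
    have hq : Real.sqrt (s^2-(x₁^2+x₂^2)) ≠ 0 := (Real.sqrt_pos.mpr hp).ne'
    have h1 : HasDerivAt (fun u : ℝ => u^2 - (x₁^2+x₂^2)) (2*s) s := by
      simpa using (hasDerivAt_pow 2 s).sub_const (x₁^2+x₂^2)
    have h3 := ((h1.sqrt hp.ne').const_mul (n:ℝ)).sin
    have h5 := (hasDerivAt_zpow (-(m:ℤ)) s (Or.inl hs0.ne')).mul h3
    have hfun : (fun s' => w s' x₁ x₂)
        = fun s' => s' ^ (-(m:ℤ)) * Real.sin (n * Real.sqrt (s'^2 - (x₁^2+x₂^2))) :=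
      funext fun s' => hw s' x₁ x₂
    rw [hfun]
    refine h5.congr_deriv ?_
    push_cast
    field_simp
  have hdt : deriv (fun s' => w s' x₁ x₂) =ᶠ[nhds t]
      (fun s => (-(m:ℝ)) * s ^ (-(m:ℤ)-1) * Real.sin (n * Real.sqrt (s^2 - (x₁^2+x₂^2)))
          + s ^ (-(m:ℤ)) * ((n:ℝ) * (s / Real.sqrt (s^2 - (x₁^2+x₂^2)))
              * Real.cos (n * Real.sqrt (s^2 - (x₁^2+x₂^2))))) := by
    filter_upwards [Ioi_mem_nhds hx] with s hs
    exact (keyt s hs).deriv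
  -- second time derivative
  have h1t : HasDerivAt (fun u : ℝ => u^2 - (x₁^2+x₂^2)) (2*t) t := by
    simpa using (hasDerivAt_pow 2 t).sub_const (x₁^2+x₂^2)
  have h2t := h1t.sqrt hp.ne'
  have h3t := ((h1t.sqrt hp.ne').const_mul (n:ℝ)).sin
  have hcost := ((h1t.sqrt hp.ne').const_mul (n:ℝ)).cos
  have hdivt := (hasDerivAt_id' (x := t)).div h2t hq0.ne'
  have hFt := (((hasDerivAt_zpow (-(m:ℤ)-1) t (Or.inl ht0.ne')).const_mul (-(m:ℝ))).mul h3t).add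
      ((hasDerivAt_zpow (-(m:ℤ)) t (Or.inl ht0.ne')).mul ((hdivt.const_mul (n:ℝ)).mul hcost))
  have E1 : deriv (fun s => deriv (fun s' => w s' x₁ x₂) s) t = _ := hdt.deriv_eq.trans hFt.deriv
  -- space direction 1 ----------------------------------------------------
  have keyy : ∀ y : ℝ, y^2 + x₂^2 < t^2 →
      HasDerivAt (fun y' => w t y' x₂)
        (t ^ (-(m:ℤ)) * ((n:ℝ) * (-y / Real.sqrt (t^2 - (y^2 + x₂^2)))
            * Real.cos (n * Real.sqrt (t^2 - (y^2 + x₂^2))))) y := by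
    intro y hy
    have hp : 0 < t^2 - (y^2 + x₂^2) := by linarith
    have hq : Real.sqrt (t^2 - (y^2+x₂^2)) ≠ 0 := (Real.sqrt_pos.mpr hp).ne'
    have h1 : HasDerivAt (fun z : ℝ => t^2 - (z^2 + x₂^2)) (-(2*y)) y := by
      simpa using ((hasDerivAt_pow 2 y).add_const (x₂^2)).const_sub (t^2)
    have h3 := (((h1.sqrt hp.ne').const_mul (n:ℝ)).sin).const_mul (t ^ (-(m:ℤ)) : ℝ)
    have hfun : (fun y' => w t y' x₂)
        = fun y' => t ^ (-(m:ℤ)) * Real.sin (n * Real.sqrt (t^2 - (y'^2 + x₂^2))) :=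
      funext fun y' => hw t y' x₂
    rw [hfun]
    refine h3.congr_deriv ?_
    field_simp
  have hmem1 : {y : ℝ | y^2 + x₂^2 < t^2} ∈ nhds x₁ := by
    have : IsOpen {y : ℝ | y^2 + x₂^2 < t^2} :=
      isOpen_lt (((continuous_pow 2).add continuous_const)) continuous_const
    exact this.mem_nhds (by simpa using hRt)
  have hdy : deriv (fun y' => w t y' x₂) =ᶠ[nhds x₁]
      (fun y => t ^ (-(m:ℤ)) * ((n:ℝ) * (-y / Real.sqrt (t^2 - (y^2 + x₂^2)))
            * Real.cos (n * Real.sqrt (t^2 - (y^2 + x₂^2))))) := by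
    filter_upwards [hmem1] with y hy
    exact (keyy y hy).deriv
  have h1y : HasDerivAt (fun z : ℝ => t^2 - (z^2 + x₂^2)) (-(2*x₁)) x₁ := by
    simpa using ((hasDerivAt_pow 2 x₁).add_const (x₂^2)).const_sub (t^2)
  have hpy : 0 < t^2 - (x₁^2 + x₂^2) := by linarith
  have h2y := h1y.sqrt hpy.ne'
  have hqy0 : (Real.sqrt (t^2 - (x₁^2 + x₂^2))) ≠ 0 := by
    refine (Real.sqrt_pos.mpr hpy).ne'
  have hcosy := ((h1y.sqrt hpy.ne').const_mul (n:ℝ)).cos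
  have hdivy := (hasDerivAt_id' (x := x₁)).neg.div h2y hqy0
  have hFy := (((hdivy.const_mul (n:ℝ)).mul hcosy).const_mul (t ^ (-(m:ℤ)) : ℝ))
  have E2 : deriv (fun y => deriv (fun y' => w t y' x₂) y) x₁ = _ := hdy.deriv_eq.trans hFy.deriv
  -- space direction 2 ----------------------------------------------------
  have keyz : ∀ y : ℝ, x₁^2 + y^2 < t^2 →
      HasDerivAt (fun y' => w t x₁ y')
        (t ^ (-(m:ℤ)) * ((n:ℝ) * (-y / Real.sqrt (t^2 - (x₁^2 + y^2)))
            * Real.cos (n * Real.sqrt (t^2 - (x₁^2 + y^2))))) y := by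
    intro y hy
    have hp : 0 < t^2 - (x₁^2 + y^2) := by linarith
    have hq : Real.sqrt (t^2 - (x₁^2+y^2)) ≠ 0 := (Real.sqrt_pos.mpr hp).ne'
    have h1 : HasDerivAt (fun z : ℝ => t^2 - (x₁^2 + z^2)) (-(2*y)) y := by
      simpa using ((hasDerivAt_pow 2 y).const_add (x₁^2)).const_sub (t^2)
    have h3 := (((h1.sqrt hp.ne').const_mul (n:ℝ)).sin).const_mul (t ^ (-(m:ℤ)) : ℝ)
    have hfun : (fun y' => w t x₁ y')
        = fun y' => t ^ (-(m:ℤ)) * Real.sin (n * Real.sqrt (t^2 - (x₁^2 + y'^2))) :=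
      funext fun y' => hw t x₁ y'
    rw [hfun]
    refine h3.congr_deriv ?_
    field_simp
  have hmem2 : {y : ℝ | x₁^2 + y^2 < t^2} ∈ nhds x₂ := by
    have : IsOpen {y : ℝ | x₁^2 + y^2 < t^2} :=
      isOpen_lt ((continuous_const.add (continuous_pow 2))) continuous_const
    exact this.mem_nhds (by simpa using hRt)
  have hdz : deriv (fun y' => w t x₁ y') =ᶠ[nhds x₂]
      (fun y => t ^ (-(m:ℤ)) * ((n:ℝ) * (-y / Real.sqrt (t^2 - (x₁^2 + y^2)))
            * Real.cos (n * Real.sqrt (t^2 - (x₁^2 + y^2))))) := by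
    filter_upwards [hmem2] with y hy
    exact (keyz y hy).deriv
  have h1z : HasDerivAt (fun z : ℝ => t^2 - (x₁^2 + z^2)) (-(2*x₂)) x₂ := by
    simpa using ((hasDerivAt_pow 2 x₂).const_add (x₁^2)).const_sub (t^2)
  have h2z := h1z.sqrt hp.ne'
  have hcosz := ((h1z.sqrt hp.ne').const_mul (n:ℝ)).cos
  have hdivz := (hasDerivAt_id' (x := x₂)).neg.div h2z hq0.ne'
  have hFz := (((hdivz.const_mul (n:ℝ)).mul hcosz).const_mul (t ^ (-(m:ℤ)) : ℝ))
  have E3 : deriv (fun y => deriv (fun y' => w t x₁ y') y) x₂ = _ := hdz.deriv_eq.trans hFz.deriv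
  rw [E1, E2, E3, hw t x₁ x₂]
  simp only [Pi.div_apply, Pi.mul_apply, Pi.neg_apply]
  set q := Real.sqrt (t^2 - (x₁^2+x₂^2)) with hqdef
  have hq2 : q^2 = t^2 - (x₁^2+x₂^2) := by rw [hqdef]; exact Real.sq_sqrt hp.le
  have hx2sq : x₂^2 = t^2 - q^2 - x₁^2 := by linarith
  have hz1 : t ^ (-(m:ℤ)-1) = t ^ (-(m:ℤ)) / t := by
    rw [zpow_sub₀ ht0.ne', zpow_one]
  have hz2 : t ^ (-(m:ℤ)-2) = t ^ (-(m:ℤ)) / t^2 := by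
    rw [zpow_sub₀ ht0.ne']
    norm_num
  have hz3 : t ^ (-(m:ℤ)-1-1) = t ^ (-(m:ℤ)) / t^2 := by
    rw [show -(m:ℤ)-1-1 = -(m:ℤ)-2 by ring, hz2]
  rw [hz1, hz2, hz3]
  push_cast
  set T := t ^ (-(m:ℤ)) with hT
  set S := Real.sin (n * q) with hS
  set C := Real.cos (n * q) with hC
  ring_nf
  rw [hx2sq]
  field_simp
  ring
end
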